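/- Summing over all roots is a morphism from the tree insertion operad to the pre-Lie (rooted tree) operad: let V₁, V₂ be disjoint finite sets with * ∈ V₁, and let t₁, t₂ be trees on V₁, V₂ respectively. Define ψ(t) = Σ_{r ∈ V} (t, r) for a tree t on V, extended linearly. Then ψ(t₁ ∘_* t₂) = ψ(t₁) ∘_* ψ(t₂), where on the left ∘_* is the (unrooted) graph insertion of trees and on the right ∘_* is the rooted insertion of rooted trees, both extended bilinearly; the left-hand side makes sense because every graph in the support of t₁ ∘_* t₂ is a tree. (This is the proposition that ψ is a monomorphism of operads from the operad of trees into the pre-Lie operad.) -/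

import Mathlib

/-!
Common framework: a simple graph on a finite vertex set `V ⊆ α` is a finite set of
unordered pairs (`Sym2 α`) of distinct elements of `V`.  The insertion
`g₁ ∘_star g₂` is an element of the free `ℚ`-module `Finset (Sym2 α) →₀ ℚ`
on the set of edge sets.
-/

open scoped Classical

variable {α : Type*} [DecidableEq α]

/-- The finite edge set `g` is a simple graph on the vertex set `V`. -/
def IsGraphOn (V : Finset α) (g : Finset (Sym2 α)) : Prop :=
  ∀ e ∈ g, ¬ e.IsDiag ∧ ∀ v ∈ e, v ∈ V

/-- The two endpoints of an unordered pair, as a `Finset`. -/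
def sym2Finset : Sym2 α → Finset α :=
  Sym2.lift ⟨fun a b => {a, b}, by intro a b; simp [Finset.pair_comm]⟩

/-- Neighbours of `x` in the edge set `g`. -/
def nbrs (g : Finset (Sym2 α)) (x : α) : Finset α :=
  (g.biUnion sym2Finset).filter fun v => s(x, v) ∈ g

/-- Remove the vertex `x` (and all incident edges) from the edge set `g`. -/
def delG (g : Finset (Sym2 α)) (x : α) : Finset (Sym2 α) :=
  g.filter fun e => x ∉ e

/-- The edges `{v, f v}` obtained from a reconnection map `f : C → V₂`. -/
def newEdges (C V₂ : Finset α) (f : {v // v ∈ C} → {w // w ∈ V₂}) : Finset (Sym2 α) :=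
  Finset.univ.image fun v : {v // v ∈ C} => s(v.1, (f v).1)

/-- Insertion `g₁ ∘_star g₂` of a graph `g₂` on the vertex set `V₂` into a graph `g₁`:
the sum, over all maps `f` from the neighbours of `star` in `g₁` to `V₂`, of the graph
obtained by deleting `star` from `g₁`, adding `g₂`, and reconnecting along `f`. -/
noncomputable def ins (V₂ : Finset α) (star : α) (g₁ g₂ : Finset (Sym2 α)) :
    Finset (Sym2 α) →₀ ℚ :=
  ∑ f : ({v // v ∈ nbrs g₁ star} → {w // w ∈ V₂}),
    Finsupp.single (delG g₁ star ∪ g₂ ∪ newEdges (nbrs g₁ star) V₂ f) 1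

/-- Bilinear extension of the insertion to the free module on graphs. -/
noncomputable def insM (V₂ : Finset α) (star : α) (x y : Finset (Sym2 α) →₀ ℚ) :
    Finset (Sym2 α) →₀ ℚ :=
  x.sum fun g₁ c₁ => y.sum fun g₂ c₂ => (c₁ * c₂) • ins V₂ star g₁ g₂

/-- The simple graph associated with an edge set. -/
def toSG (g : Finset (Sym2 α)) : SimpleGraph α where
  Adj x y := x ≠ y ∧ s(x, y) ∈ g
  symm := by
    refine ⟨fun x y h => ?_⟩
    exact ⟨h.1.symm, by rw [Sym2.eq_swap]; exact h.2⟩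
  loopless := by
    refine ⟨fun x h => ?_⟩
    exact h.1 rfl

/-- The edge set `g` is connected on `V`: any two vertices of `V` are joined by a path. -/
def IsConnOn (V : Finset α) (g : Finset (Sym2 α)) : Prop :=
  ∀ x ∈ V, ∀ y ∈ V, (toSG g).Reachable x y

/-- A tree on `V`: a connected acyclic simple graph on `V`. -/
def IsTreeOn (V : Finset α) (g : Finset (Sym2 α)) : Prop :=
  IsGraphOn V g ∧ IsConnOn V g ∧ (toSG g).IsAcyclic

/-- The neighbours `p` of `star` in `g` such that `r` is reachable from `p` after deleting
`star`.  For a tree `g` and `star ≠ r` this is the singleton consisting of the unique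
neighbour of `star` on the path from `star` to `r`. -/
noncomputable def towards (g : Finset (Sym2 α)) (star r : α) : Finset α :=
  (nbrs g star).filter fun p => (toSG (delG g star)).Reachable p r

/-- Rooted insertion of a rooted tree `t₂` (with vertex set `V₂` and root `t₂.2`)
into a rooted tree `t₁` at the vertex `star`: delete `star`, reconnect the child ends
(neighbours of `star` not towards the root) to arbitrary vertices of `V₂`, and
reconnect the parent end (the neighbour towards the root, when `star ≠ t₁.2`) to the
root of `t₂`; the new root is `t₁.2` unless `star = t₁.2`, in which case it is `t₂.2`. -/
noncomputable def rins (V₂ : Finset α) (star : α)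
    (t₁ t₂ : Finset (Sym2 α) × α) : (Finset (Sym2 α) × α) →₀ ℚ :=
  let C : Finset α :=
    if star = t₁.2 then nbrs t₁.1 star else nbrs t₁.1 star \ towards t₁.1 star t₁.2
  let extra : Finset (Sym2 α) :=
    if star = t₁.2 then ∅ else (towards t₁.1 star t₁.2).image fun p => s(p, t₂.2)
  let r' : α := if star = t₁.2 then t₂.2 else t₁.2
  ∑ f : ({v // v ∈ C} → {w // w ∈ V₂}),
    Finsupp.single (delG t₁.1 star ∪ t₂.1 ∪ newEdges C V₂ f ∪ extra, r') 1

/-- Bilinear extension of the rooted insertion to the free module on rooted graphs. -/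
noncomputable def rinsM (V₂ : Finset α) (star : α)
    (x y : (Finset (Sym2 α) × α) →₀ ℚ) : (Finset (Sym2 α) × α) →₀ ℚ :=
  x.sum fun t₁ c₁ => y.sum fun t₂ c₂ => (c₁ * c₂) • rins V₂ star t₁ t₂

/-- `ψ` on a single graph: the sum of all rootings of the graph at vertices of `V`. -/
noncomputable def psiV (V : Finset α) (g : Finset (Sym2 α)) : (Finset (Sym2 α) × α) →₀ ℚ :=
  ∑ r ∈ V, Finsupp.single (g, r) 1

/-- Linear extension of `ψ` to the free module on graphs, the graphs being regarded as
graphs on the vertex set `V`. -/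
noncomputable def psiL (V : Finset α) (x : Finset (Sym2 α) →₀ ℚ) :
    (Finset (Sym2 α) × α) →₀ ℚ :=
  x.sum fun g c => c • psiV V g


/-!
Rooting a term of `t₁ ∘_star t₂` at a vertex `r₂` of `t₂` gives exactly the corresponding term
of the rooted insertion `(t₁, star) ∘_star (t₂, r₂)`. Rooting it at a vertex `r ≠ star` of `t₁`:
since `t₁` is a tree, exactly one neighbour `p` of `star` lies towards `r`, and splitting each
reconnection map `f` according to its value `r₂ = f p` matches the terms with those of
`(t₁, r) ∘_star (t₂, r₂)`, where `p` is attached to the root `r₂` and the other neighbours of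
`star` are reconnected freely.
-/

section Graph

variable {g : Finset (Sym2 α)}

lemma mem_sym2Finset {e : Sym2 α} {v : α} : v ∈ sym2Finset e ↔ v ∈ e := by
  induction e using Sym2.ind with
  | _ a b => simp [sym2Finset]

lemma mem_nbrs {x v : α} : v ∈ nbrs g x ↔ s(x, v) ∈ g := by
  simp only [nbrs, Finset.mem_filter, Finset.mem_biUnion, and_iff_right_iff_imp]
  exact fun h => ⟨s(x, v), h, mem_sym2Finset.mpr (Sym2.mem_mk_right x v)⟩

lemma toSG_delG_adj_iff {x u v : α} :
    (toSG (delG g x)).Adj u v ↔ (toSG g).Adj u v ∧ u ≠ x ∧ v ≠ x := by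
  simp only [toSG, delG, Finset.mem_filter, Sym2.mem_iff]
  grind

lemma toSG_delG_le (x : α) : toSG (delG g x) ≤ toSG g :=
  fun _ _ h => (toSG_delG_adj_iff.mp h).1

lemma notMem_support_of_toSG_delG {x u v : α} (hv : v ≠ x) :
    ∀ W : (toSG (delG g x)).Walk u v, x ∉ W.support
  | .nil => by simpa using hv.symm
  | .cons h W => by
    simpa [(toSG_delG_adj_iff.mp h).2.1.symm] using notMem_support_of_toSG_delG hv W

lemma reachable_toSG_delG_of_notMem_support {x u v : α} :
    ∀ W : (toSG g).Walk u v, x ∉ W.support → (toSG (delG g x)).Reachable u v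
  | .nil, _ => .rfl
  | .cons h W, hW => by
    simp only [SimpleGraph.Walk.support_cons, List.mem_cons, not_or] at hW
    have hadj : (toSG (delG g x)).Adj u _ :=
      toSG_delG_adj_iff.mpr ⟨h, Ne.symm hW.1, fun h' => hW.2 (h' ▸ W.start_mem_support)⟩
    exact hadj.reachable.trans (reachable_toSG_delG_of_notMem_support W hW.2)

lemma mem_towards_iff {star r p : α} (hr : r ≠ star) :
    p ∈ towards g star r ↔
      ∃ A : (toSG g).Walk star r, A.IsPath ∧ A.getVert 1 = p := by
  constructor
  · intro hp
    obtain ⟨hpN, hreach⟩ := Finset.mem_filter.mp hp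
    obtain ⟨W, hW⟩ := hreach.some.toPath
    have hW_star := notMem_support_of_toSG_delG hr W
    have hadj : (toSG g).Adj star p :=
      ⟨fun h => hW_star (h ▸ W.start_mem_support), mem_nbrs.mp hpN⟩
    refine ⟨.cons hadj (W.mapLe (toSG_delG_le star)), ?_, by simp⟩
    rw [SimpleGraph.Walk.cons_isPath_iff, SimpleGraph.Walk.isPath_mapLe,
      SimpleGraph.Walk.support_mapLe_eq_support]
    exact ⟨hW, hW_star⟩
  · rintro ⟨A, hA, hp⟩
    cases A with
    | nil => exact absurd rfl hr
    | cons h q =>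
      rw [SimpleGraph.Walk.cons_isPath_iff] at hA
      simp only [SimpleGraph.Walk.getVert_cons_succ, SimpleGraph.Walk.getVert_zero] at hp
      subst hp
      exact Finset.mem_filter.mpr
        ⟨mem_nbrs.mpr h.2, reachable_toSG_delG_of_notMem_support q hA.2⟩

lemma towards_eq_singleton {star r : α} (hacyc : (toSG g).IsAcyclic)
    (hreach : (toSG g).Reachable star r) (hr : r ≠ star) :
    ∃ p, towards g star r = {p} := by
  obtain ⟨A, hA⟩ := hreach.some.toPath
  refine ⟨A.getVert 1, Finset.eq_singleton_iff_unique_mem.mpr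
    ⟨(mem_towards_iff hr).mpr ⟨A, hA, rfl⟩, fun p hp => ?_⟩⟩
  obtain ⟨A', hA', rfl⟩ := (mem_towards_iff hr).mp hp
  have hAA : A' = A :=
    congrArg Subtype.val ((hacyc.subsingleton_path star r).elim ⟨A', hA'⟩ ⟨A, hA⟩)
  rw [hAA]

end Graph

section Reindex

variable {β : Type*}

def funSplitAt (N : Finset α) {p : α} (hp : p ∈ N) :
    ({v // v ∈ N} → β) ≃ ({v // v ∈ N.erase p} → β) × β where
  toFun f := (fun v => f ⟨v.1, Finset.mem_of_mem_erase v.2⟩, f ⟨p, hp⟩)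
  invFun fb v := if h : v.1 = p then fb.2 else fb.1 ⟨v.1, Finset.mem_erase.mpr ⟨h, v.2⟩⟩
  left_inv f := by
    funext v
    by_cases h : v.1 = p
    · simp only [dif_pos h]
      exact congrArg f (Subtype.ext h.symm)
    · simp only [dif_neg h]
  right_inv fb := by
    refine Prod.ext (funext fun v => ?_) (by simp)
    simp only [dif_neg (Finset.mem_erase.mp v.2).1]

lemma newEdges_eq_union_erase {N V₂ : Finset α} {p : α} (hp : p ∈ N)
    (f : {v // v ∈ N} → {w // w ∈ V₂}) :
    newEdges N V₂ f = newEdges (N.erase p) V₂ (funSplitAt N hp f).1 ∪ {s(p, (f ⟨p, hp⟩).1)} := by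
  ext e
  simp only [newEdges, funSplitAt, Equiv.coe_fn_mk, Finset.mem_union, Finset.mem_image,
    Finset.mem_univ, true_and, Finset.mem_singleton]
  constructor
  · rintro ⟨v, rfl⟩
    by_cases h : v.1 = p
    · obtain ⟨v, hv⟩ := v
      subst h
      exact Or.inr rfl
    · exact Or.inl ⟨⟨v.1, Finset.mem_erase.mpr ⟨h, v.2⟩⟩, rfl⟩
  · rintro (⟨v, rfl⟩ | rfl)
    · exact ⟨⟨v.1, Finset.mem_of_mem_erase v.2⟩, rfl⟩
    · exact ⟨⟨p, hp⟩, rfl⟩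

lemma sum_newEdges_eq_sum_sum_erase {M : Type*} [AddCommMonoid M] {N : Finset α} (V₂ : Finset α)
    {p : α} (hp : p ∈ N) (F : Finset (Sym2 α) → M) :
    ∑ f : {v // v ∈ N} → {w // w ∈ V₂}, F (newEdges N V₂ f)
      = ∑ r₂ ∈ V₂, ∑ f : {v // v ∈ N.erase p} → {w // w ∈ V₂},
          F (newEdges (N.erase p) V₂ f ∪ {s(p, r₂)}) := by
  simp_rw [newEdges_eq_union_erase hp]
  rw [← Finset.sum_coe_sort V₂, Finset.sum_comm, ← Fintype.sum_prod_type']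
  exact Fintype.sum_equiv (funSplitAt N hp) _ _ fun _ => rfl

end Reindex

lemma rinsM_eq_linearCombination (V₂ : Finset α) (star : α) (x y : (Finset (Sym2 α) × α) →₀ ℚ) :
    rinsM V₂ star x y = Finsupp.linearCombination ℚ
      (fun t₁ => Finsupp.linearCombination ℚ (rins V₂ star t₁) y) x := by
  simp only [rinsM, Finsupp.linearCombination_apply, Finsupp.smul_sum, mul_smul]

omit [DecidableEq α] in
lemma psiL_sum_single {ι : Type*} (V : Finset α) (s : Finset ι) (g : ι → Finset (Sym2 α)) :
    psiL V (∑ i ∈ s, Finsupp.single (g i) 1) = ∑ i ∈ s, psiV V (g i) := by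
  simp [psiL, ← Finsupp.linearCombination_apply]

lemma rinsM_psiV_psiV (V₁ V₂ : Finset α) (star : α) (t₁ t₂ : Finset (Sym2 α)) :
    rinsM V₂ star (psiV V₁ t₁) (psiV V₂ t₂)
      = ∑ r₁ ∈ V₁, ∑ r₂ ∈ V₂, rins V₂ star (t₁, r₁) (t₂, r₂) := by
  simp [rinsM_eq_linearCombination, psiV]

section RootedInsertion

variable (V₂ : Finset α) {star : α} {t₁ t₂ : Finset (Sym2 α)}

lemma rins_of_root_eq (r₂ : α) :
    rins V₂ star (t₁, star) (t₂, r₂)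
      = ∑ f : {v // v ∈ nbrs t₁ star} → {w // w ∈ V₂},
          Finsupp.single (delG t₁ star ∪ t₂ ∪ newEdges (nbrs t₁ star) V₂ f, r₂) 1 := by
  simp only [rins]
  rw [if_pos rfl]
  simp

lemma rins_of_towards_eq_singleton {r p : α} (hr : r ≠ star) (htw : towards t₁ star r = {p})
    (r₂ : α) :
    rins V₂ star (t₁, r) (t₂, r₂)
      = ∑ f : {v // v ∈ (nbrs t₁ star).erase p} → {w // w ∈ V₂},
          Finsupp.single (delG t₁ star ∪ t₂ ∪ newEdges ((nbrs t₁ star).erase p) V₂ f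
            ∪ {s(p, r₂)}, r) 1 := by
  simp only [rins]
  rw [if_neg hr.symm, htw, Finset.sdiff_singleton_eq_erase]
  simp [hr.symm]

lemma sum_rins_of_root_ne {r : α} (hacyc : (toSG t₁).IsAcyclic)
    (hreach : (toSG t₁).Reachable star r) (hr : r ≠ star) :
    ∑ r₂ ∈ V₂, rins V₂ star (t₁, r) (t₂, r₂)
      = ∑ f : {v // v ∈ nbrs t₁ star} → {w // w ∈ V₂},
          Finsupp.single (delG t₁ star ∪ t₂ ∪ newEdges (nbrs t₁ star) V₂ f, r) 1 := by
  obtain ⟨p, htw⟩ := towards_eq_singleton hacyc hreach hr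
  have hp : p ∈ nbrs t₁ star :=
    Finset.filter_subset _ _ (htw ▸ Finset.mem_singleton_self p : p ∈ towards t₁ star r)
  rw [sum_newEdges_eq_sum_sum_erase V₂ hp fun G => Finsupp.single (delG t₁ star ∪ t₂ ∪ G, r) 1]
  simp only [rins_of_towards_eq_singleton V₂ hr htw, Finset.union_assoc]

end RootedInsertion

lemma psiV_union {A B : Finset α} (h : Disjoint A B) (g : Finset (Sym2 α)) :
    psiV (A ∪ B) g = psiV A g + psiV B g :=
  Finset.sum_union h

theorem psi_is_operad_morphism_general
    (V₁ V₂ : Finset α) (star : α)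
    (hd : Disjoint V₁ V₂) (hstar : star ∈ V₁)
    (t₁ t₂ : Finset (Sym2 α))
    (ht₁ : IsTreeOn V₁ t₁) :
    psiL (V₁.erase star ∪ V₂) (ins V₂ star t₁ t₂)
      = rinsM V₂ star (psiV V₁ t₁) (psiV V₂ t₂) := by
  rw [ins, psiL_sum_single, rinsM_psiV_psiV, ← Finset.add_sum_erase V₁ _ hstar, add_comm]
  simp only [psiV_union (hd.mono_left (Finset.erase_subset star V₁)), Finset.sum_add_distrib]
  congr 1
  · simp only [psiV]
    rw [Finset.sum_comm]
    refine Finset.sum_congr rfl fun r hr => (sum_rins_of_root_ne V₂ ht₁.2.2 ?_ ?_).symm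
    · exact ht₁.2.1 star hstar r (Finset.mem_of_mem_erase hr)
    · exact Finset.ne_of_mem_erase hr
  · simp only [psiV, rins_of_root_eq]
    exact Finset.sum_comm

/-- **Summing over all roots is a morphism from the tree insertion operad to the pre-Lie
(rooted tree) operad**: `ψ(t₁ ∘_star t₂) = ψ(t₁) ∘_star ψ(t₂)`, where on the left the
insertion is the (unrooted) graph insertion and on the right the rooted insertion of
rooted trees, both extended bilinearly. -/
theorem psi_is_operad_morphism
    (V₁ V₂ : Finset α) (star : α)
    (hd : Disjoint V₁ V₂) (hstar : star ∈ V₁)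
    (t₁ t₂ : Finset (Sym2 α))
    (ht₁ : IsTreeOn V₁ t₁) (ht₂ : IsTreeOn V₂ t₂) :
    psiL (V₁.erase star ∪ V₂) (ins V₂ star t₁ t₂)
      = rinsM V₂ star (psiV V₁ t₁) (psiV V₂ t₂) :=
  psi_is_operad_morphism_general V₁ V₂ star hd hstar t₁ t₂ ht₁
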